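/- Fix ς ∈ (0,1) and set c = (1+ς)/(1-ς). Define φ : {z ∈ ℂ : |z| < 1} → ℂ by φ(z) = exp(c·(1+z)/(z-1)). Then φ maps the open unit disk into the punctured unit disk (in fact 0 < |φ(z)| < 1), and for every z with |z| < 1 one has |φ'(z)|² / ( |φ(z)|² · (log|φ(z)|)² ) = 4/(1-|z|²)². In particular this quantity is independent of ς. -/

import Mathlib

open Complex

/-!
Write `φ = exp ∘ ψ` with `ψ(z) = c (1 + z)/(z - 1)`. Since `log ‖exp w‖ = Re w` and
`‖(exp ∘ ψ)'‖ = ‖exp ∘ ψ‖ ‖ψ'‖`, the quantity in question is `‖ψ'‖² / (Re ψ)²`. Here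
`ψ' = -2c/(z - 1)²` and `Re ψ = c (‖z‖² - 1)/‖z - 1‖²`, so the factor `c` and the denominators
`‖z - 1‖⁴` cancel, leaving `4/(1 - ‖z‖²)²`; `Re ψ < 0` on the disk gives `0 < ‖φ‖ < 1`.
-/

theorem norm_deriv_cexp_sq_div_log_sq {ψ : ℂ → ℂ} {ψ' z : ℂ} (hψ : HasDerivAt ψ ψ' z) :
    ‖deriv (fun w => exp (ψ w)) z‖ ^ 2 / (‖exp (ψ z)‖ ^ 2 * Real.log ‖exp (ψ z)‖ ^ 2)
      = ‖ψ'‖ ^ 2 / (ψ z).re ^ 2 := by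
  rw [hψ.cexp.deriv, norm_mul, norm_exp, Real.log_exp]
  field_simp [(Real.exp_pos (ψ z).re).ne']

theorem re_one_add_div_sub_one (z : ℂ) :
    ((1 + z) / (z - 1)).re = (‖z‖ ^ 2 - 1) / ‖z - 1‖ ^ 2 := by
  simp only [div_re, add_re, add_im, sub_re, sub_im, one_re, one_im, Complex.sq_norm, normSq_apply]
  ring

theorem hasDerivAt_one_add_div_sub_one {z : ℂ} (hz : z ≠ 1) :
    HasDerivAt (fun w => (1 + w) / (w - 1)) (-2 / (z - 1) ^ 2) z :=
  (((hasDerivAt_id' z).const_add 1).div ((hasDerivAt_id' z).sub_const 1)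
    (sub_ne_zero.mpr hz)).congr_deriv (by ring)

/-- Quasi-coordinate computation: for ς ∈ (0,1), c = (1+ς)/(1-ς) and
φ(z) = exp(c(1+z)/(z-1)), the map φ sends the unit disk into the punctured disk and
|φ'(z)|²/(|φ(z)|²(log|φ(z)|)²) = 4/(1-|z|²)², independently of ς. -/
theorem stmt2 (ς : ℝ) (hς : ς ∈ Set.Ioo (0 : ℝ) 1)
    (c : ℝ) (hc : c = (1 + ς) / (1 - ς))
    (φ : ℂ → ℂ) (hφ : ∀ z, φ z = Complex.exp ((c : ℂ) * (1 + z) / (z - 1)))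
    (z : ℂ) (hz : ‖z‖ < 1) :
    (0 < ‖φ z‖ ∧ ‖φ z‖ < 1) ∧
    (‖deriv φ z‖) ^ 2 /
        ((‖φ z‖) ^ 2 * (Real.log (‖φ z‖)) ^ 2)
      = 4 / (1 - (‖z‖) ^ 2) ^ 2 := by
  have hc0 : 0 < c := hc ▸ div_pos (by linarith [hς.1]) (by linarith [hς.2])
  have hz1 : z ≠ 1 := by rintro rfl; simp at hz
  have hz1' : ‖z - 1‖ ≠ 0 := norm_ne_zero_iff.mpr (sub_ne_zero.mpr hz1)
  have hφ' : φ = fun w => exp (c * ((1 + w) / (w - 1))) := by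
    funext w; rw [hφ, mul_div_assoc]
  have hre : (c * ((1 + z) / (z - 1))).re = c * ((‖z‖ ^ 2 - 1) / ‖z - 1‖ ^ 2) := by
    rw [re_ofReal_mul, re_one_add_div_sub_one]
  have hre_neg : (c * ((1 + z) / (z - 1))).re < 0 := by
    rw [hre]
    exact mul_neg_of_pos_of_neg hc0 (div_neg_of_neg_of_pos (by nlinarith [norm_nonneg z])
      (by positivity))
  refine ⟨⟨?_, ?_⟩, ?_⟩
  · rw [hφ', norm_exp]; exact Real.exp_pos _
  · rw [hφ', norm_exp]; exact Real.exp_lt_one_iff.mpr hre_neg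
  · rw [hφ', norm_deriv_cexp_sq_div_log_sq ((hasDerivAt_one_add_div_sub_one hz1).const_mul _),
      hre, norm_mul, norm_div, norm_pow, norm_neg, norm_real, Real.norm_of_nonneg hc0.le]
    have hz2 : ‖z‖ ^ 2 - 1 ≠ 0 := by nlinarith [norm_nonneg z]
    rw [show (1 - ‖z‖ ^ 2) ^ 2 = (‖z‖ ^ 2 - 1) ^ 2 by ring]
    field_simp
    norm_num
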